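/- arXiv:2210.11996 — 3 statements merged into one kernel-verified Lean document; each statement's English description precedes it below -/
import Mathlib

section
/- In a simple graph, if a vertex v lies on a simple cycle (a cycle of length at least 3 with no repeated vertices), then v also lies on a chordless (induced) cycle, i.e., a simple cycle in which no two non-consecutive vertices of the cycle are adjacent. -/
/-- `p 0, p 1, ..., p (k-1)` is a walk in `G` (consecutive vertices adjacent). -/
def IsPathOn {V : Type*} (G : SimpleGraph V) (p : ℕ → V) (k : ℕ) : Prop :=
  ∀ i, i + 1 < k → G.Adj (p i) (p (i + 1))

/-- the first `k` vertices of `p` are pairwise distinct. -/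
def SimpleOn {V : Type*} (p : ℕ → V) (k : ℕ) : Prop :=
  ∀ i j, i < k → j < k → p i = p j → i = j

/-- `p 0, ..., p (k-1)` is a simple cycle: length at least 3, distinct vertices,
consecutive vertices adjacent, and the last vertex adjacent to the first. -/
def IsSimpleCycle {V : Type*} (G : SimpleGraph V) (p : ℕ → V) (k : ℕ) : Prop :=
  3 ≤ k ∧ SimpleOn p k ∧ IsPathOn G p k ∧ G.Adj (p (k - 1)) (p 0)

/-- indices `i` and `j` are (cyclically) consecutive positions on a cycle of length `k`. -/
def CycConsec (k i j : ℕ) : Prop :=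
  i + 1 = j ∨ j + 1 = i ∨ (i = 0 ∧ j = k - 1) ∨ (j = 0 ∧ i = k - 1)

/-- A chordless cycle: a simple cycle in which no two non-consecutive cycle
vertices are adjacent. -/
def IsChordlessCycle {V : Type*} (G : SimpleGraph V) (p : ℕ → V) (k : ℕ) : Prop :=
  IsSimpleCycle G p k ∧
    ∀ i j, i < k → j < k → i ≠ j → ¬ CycConsec k i j → ¬ G.Adj (p i) (p j)

/-!
Rotate the cycle so that `v` is its first vertex. If the cycle has a chord `p a ~ p b` with
`a < b`, the detour `p 0, …, p a, p b, …, p (k - 1)` is a strictly shorter simple cycle still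
starting at `v`; strong induction on the length ends at a chordless cycle through `v`.
-/

namespace IsSimpleCycle

variable {V : Type*} {G : SimpleGraph V} {p : ℕ → V} {k : ℕ}

theorem adj_mod (h : IsSimpleCycle G p k) (t : ℕ) : G.Adj (p (t % k)) (p ((t + 1) % k)) := by
  obtain ⟨hk, -, hpath, hclose⟩ := h
  have hmod : (t + 1) % k = (t % k + 1) % k := by
    rw [Nat.add_mod, Nat.mod_eq_of_lt (show 1 < k by omega)]
  rcases Nat.lt_or_ge (t % k + 1) k with hlt | hge
  · rw [hmod, Nat.mod_eq_of_lt hlt]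
    exact hpath _ hlt
  · have hlast : t % k + 1 = k := by have := Nat.mod_lt t (show 0 < k by omega); omega
    rw [hmod, hlast, Nat.mod_self, show t % k = k - 1 by omega]
    exact hclose

theorem rotate (h : IsSimpleCycle G p k) (i : ℕ) :
    IsSimpleCycle G (fun j => p ((j + i) % k)) k := by
  have hk0 : 0 < k := by have := h.1; omega
  refine ⟨h.1, fun a b ha hb hab => ?_, fun j _ => ?_, ?_⟩
  · have hmod : a % k = b % k :=
      Nat.ModEq.add_right_cancel' i (h.2.1 _ _ (Nat.mod_lt _ hk0) (Nat.mod_lt _ hk0) hab)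
    rwa [Nat.mod_eq_of_lt ha, Nat.mod_eq_of_lt hb] at hmod
  · simpa only [Nat.add_right_comm j 1 i] using h.adj_mod (j + i)
  · have hwrap : (k - 1 + i + 1) % k = (0 + i) % k := by
      rw [show k - 1 + i + 1 = k + i by omega, Nat.add_mod_left, Nat.zero_add]
    simpa only [hwrap] using h.adj_mod (k - 1 + i)

end IsSimpleCycle

theorem cycConsec_comm {k i j : ℕ} : CycConsec k i j ↔ CycConsec k j i := by
  unfold CycConsec
  tauto

def shortcut {V : Type*} (p : ℕ → V) (a b : ℕ) : ℕ → V :=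
  fun j => if j ≤ a then p j else p (b + (j - (a + 1)))

section Shortcut

variable {V : Type*} {G : SimpleGraph V} {p : ℕ → V} {k a b : ℕ}

theorem shortcut_of_le {j : ℕ} (hj : j ≤ a) : shortcut p a b j = p j := if_pos hj

theorem shortcut_of_lt {j : ℕ} (hj : a < j) : shortcut p a b j = p (b + (j - (a + 1))) :=
  if_neg (Nat.not_le.mpr hj)

theorem SimpleOn.shortcut (h : SimpleOn p k) (hab : a < b) (hbk : b ≤ k) :
    SimpleOn (shortcut p a b) (a + 1 + (k - b)) := by
  intro x y hx hy hxy
  rcases Nat.lt_or_ge a x with hax | hxa <;> rcases Nat.lt_or_ge a y with hay | hya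
  · rw [shortcut_of_lt hax, shortcut_of_lt hay] at hxy
    have := h _ _ (by omega) (by omega) hxy
    omega
  · rw [shortcut_of_lt hax, shortcut_of_le hya] at hxy
    have := h _ _ (by omega) (by omega) hxy
    omega
  · rw [shortcut_of_le hxa, shortcut_of_lt hay] at hxy
    have := h _ _ (by omega) (by omega) hxy
    omega
  · rw [shortcut_of_le hxa, shortcut_of_le hya] at hxy
    exact h _ _ (by omega) (by omega) hxy

theorem IsPathOn.shortcut (h : IsPathOn G p k) (hab : a < b) (hbk : b ≤ k)
    (hadj : G.Adj (p a) (p b)) : IsPathOn G (shortcut p a b) (a + 1 + (k - b)) := by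
  intro j hj
  rcases Nat.lt_or_ge j a with hja | haj
  · rw [shortcut_of_le hja.le, shortcut_of_le hja]
    exact h j (by omega)
  · rw [shortcut_of_lt (show a < j + 1 by omega), show j + 1 - (a + 1) = j - a by omega]
    rcases haj.eq_or_lt with rfl | hlt
    · rwa [shortcut_of_le le_rfl, Nat.sub_self, Nat.add_zero]
    · rw [shortcut_of_lt hlt, show b + (j - a) = b + (j - (a + 1)) + 1 by omega]
      exact h _ (by omega)

theorem IsSimpleCycle.shortcut (hc : IsSimpleCycle G p k) (hab : a < b) (hbk : b < k)
    (hnc : ¬ CycConsec k a b) (hadj : G.Adj (p a) (p b)) :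
    IsSimpleCycle G (shortcut p a b) (a + 1 + (k - b)) := by
  obtain ⟨hk, hsimple, hpath, hclose⟩ := hc
  simp only [CycConsec, not_or, not_and] at hnc
  obtain ⟨hsucc, -, hends, -⟩ := hnc
  refine ⟨by omega, hsimple.shortcut hab hbk.le, hpath.shortcut hab hbk.le hadj, ?_⟩
  rw [shortcut_of_lt (show a < a + 1 + (k - b) - 1 by omega), shortcut_of_le (Nat.zero_le a),
    show b + (a + 1 + (k - b) - 1 - (a + 1)) = k - 1 by omega]
  exact hclose

end Shortcut

theorem IsSimpleCycle.exists_isChordlessCycle_through_zero {V : Type*} {G : SimpleGraph V}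
    {p : ℕ → V} {k : ℕ} (hc : IsSimpleCycle G p k) :
    ∃ (q : ℕ → V) (m : ℕ), IsChordlessCycle G q m ∧ ∃ j, j < m ∧ q j = p 0 := by
  induction k using Nat.strong_induction_on generalizing p with
  | _ k ih =>
    by_cases hchordless :
        ∀ a b, a < k → b < k → a ≠ b → ¬ CycConsec k a b → ¬ G.Adj (p a) (p b)
    · exact ⟨p, k, ⟨hc, hchordless⟩, 0, by have := hc.1; omega, rfl⟩
    push Not at hchordless
    obtain ⟨a, b, ha, hb, hne, hnc, hadj⟩ := hchordless
    wlog hab : a < b generalizing a b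
    · exact this b a hb ha hne.symm (mt cycConsec_comm.mp hnc) hadj.symm (by omega)
    have hsucc : a + 1 ≠ b := fun h => hnc (Or.inl h)
    obtain ⟨q, m, hq, j, hjm, hqj⟩ := ih _ (by omega) (hc.shortcut hab hb hnc hadj)
    exact ⟨q, m, hq, j, hjm, hqj.trans (shortcut_of_le (Nat.zero_le a))⟩

/-- If a vertex `v` lies on a simple cycle, then it lies on a chordless cycle. -/
theorem vertex_on_simple_cycle_lies_on_chordless_cycle
    {V : Type*} (G : SimpleGraph V) (v : V) (p : ℕ → V) (k : ℕ)
    (hcyc : IsSimpleCycle G p k) (i : ℕ) (hi : i < k) (hv : p i = v) :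
    ∃ (q : ℕ → V) (m : ℕ), IsChordlessCycle G q m ∧ ∃ j, j < m ∧ q j = v := by
  obtain ⟨q, m, hq, j, hjm, hqj⟩ := (hcyc.rotate i).exists_isChordlessCycle_through_zero
  refine ⟨q, m, hq, j, hjm, ?_⟩
  rw [hqj, Nat.zero_add, Nat.mod_eq_of_lt hi, hv]
end

section
/- In a hypergraph H, suppose a node v lies on a simple cycle v = v_1, v_2, ..., v_ℓ, v_1 (ℓ ≥ 3, all vertices distinct, consecutive vertices are neighbors, i.e., share a hyperedge). Then at least one of the following holds: (1) v lies on a chordless cycle of H; (2) some hyperedge of H contains all three of v, v_2, and v_ℓ; or (3) there is a hand-fan centered at v from v_2 to v_ℓ, i.e., a chordless path u_1 = v_2, ..., u_k = v_ℓ with k ≥ 3 such that for every 1 ≤ i < k there is a hyperedge containing {v, u_i, u_{i+1}} and v ≠ u_i for all i. -/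
/-- Two vertices are neighbors in a hypergraph `H` (given by its set of
hyperedges) if they are distinct and share a hyperedge. -/
def HAdj {V : Type*} (H : Set (Set V)) (a b : V) : Prop :=
  a ≠ b ∧ ∃ e ∈ H, a ∈ e ∧ b ∈ e

def HIsPathOn {V : Type*} (H : Set (Set V)) (p : ℕ → V) (k : ℕ) : Prop :=
  ∀ i, i + 1 < k → HAdj H (p i) (p (i + 1))

def HChordlessOn {V : Type*} (H : Set (Set V)) (p : ℕ → V) (k : ℕ) : Prop :=
  ∀ i j, j < k → i + 1 < j → ¬ HAdj H (p i) (p j)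

/-- A chordless path in a hypergraph: a simple path where no two
non-consecutive vertices are neighbors. -/
def HChordlessPath {V : Type*} (H : Set (Set V)) (p : ℕ → V) (k : ℕ) : Prop :=
  HIsPathOn H p k ∧ SimpleOn p k ∧ HChordlessOn H p k

/-- A simple cycle in a hypergraph: length at least 3, all vertices distinct,
consecutive vertices neighbors (cyclically). -/
def HSimpleCycle {V : Type*} (H : Set (Set V)) (p : ℕ → V) (k : ℕ) : Prop :=
  3 ≤ k ∧ SimpleOn p k ∧ HIsPathOn H p k ∧ HAdj H (p (k - 1)) (p 0)

/-- A chordless cycle in a hypergraph: a simple cycle in which no two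
non-consecutive vertices are neighbors and no single hyperedge contains all
cycle vertices. -/
def HChordlessCycle {V : Type*} (H : Set (Set V)) (p : ℕ → V) (k : ℕ) : Prop :=
  HSimpleCycle H p k ∧
    (∀ i j, i < k → j < k → i ≠ j → ¬ CycConsec k i j → ¬ HAdj H (p i) (p j)) ∧
    ¬ ∃ e ∈ H, ∀ i, i < k → p i ∈ e

/-- A hand-fan from `u 0` to `u (k-1)` centered at `v`: a chordless path of at
least 3 vertices, a hyperedge containing `{v, u i, u (i+1)}` for each `i`, and
`v` distinct from all path vertices. -/
def HandFan {V : Type*} (H : Set (Set V)) (v : V) (u : ℕ → V) (k : ℕ) : Prop :=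
  3 ≤ k ∧ HChordlessPath H u k ∧
    (∀ i, i + 1 < k → ∃ e ∈ H, v ∈ e ∧ u i ∈ e ∧ u (i + 1) ∈ e) ∧
    (∀ i, i < k → v ≠ u i)

/-!
Remove `v`. The rest of the cycle is a walk from `p 1` to `p (k - 1)` avoiding `v`, and a shortest
such walk is a chordless path `u` whose two ends are neighbours of `v`. If every consecutive pair of
`u` lies in a hyperedge with `v`, then `u` is a hand-fan, or a single hyperedge when `u` has two
vertices. Otherwise pick a pair `u i, u (i + 1)` without such a hyperedge, and the neighbours
`u s`, `u t` of `v` closest to it on either side: `v, u s, ..., u t` is a chordless cycle.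
-/

section

variable {V : Type*} {H : Set (Set V)}

theorem HAdj.symm {a b : V} (h : HAdj H a b) : HAdj H b a :=
  ⟨h.1.symm, h.2.imp fun _ ⟨he, ha, hb⟩ => ⟨he, hb, ha⟩⟩

def seqCons (c : V) (u : ℕ → V) : ℕ → V
  | 0 => c
  | j + 1 => u j

@[simp] theorem seqCons_zero (c : V) (u : ℕ → V) : seqCons c u 0 = c := rfl

@[simp] theorem seqCons_succ (c : V) (u : ℕ → V) (j : ℕ) : seqCons c u (j + 1) = u j := rfl

theorem HIsPathOn.simpleOn_of_hChordlessOn {w : ℕ → V} {n : ℕ} (hw : HIsPathOn H w n)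
    (hc : HChordlessOn H w n) (hends : w 0 ≠ w (n - 1)) : SimpleOn w n := by
  -- `w s = w t` turns the edge after `t` (or, if `t` is last, the one before `s`) into a chord
  have hne : ∀ s t, s < t → t < n → w s ≠ w t := by
    intro s t hst ht heq
    by_cases hnext : t + 1 < n
    · exact hc s (t + 1) hnext (by omega) (by rw [heq]; exact hw t hnext)
    · obtain rfl | hs := Nat.eq_zero_or_pos s
      · exact hends (by rw [heq, show t = n - 1 by omega])
      · have hprev := hw (s - 1) (by omega)
        rw [Nat.sub_add_cancel hs, heq] at hprev
        exact hc (s - 1) t ht (by omega) hprev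
  intro i j hi hj hij
  by_contra hij'
  rcases lt_or_gt_of_ne hij' with h | h
  · exact hne i j h hj hij
  · exact hne j i h hi hij.symm

theorem HIsPathOn.skip {w : ℕ → V} {n s t : ℕ} (hw : HIsPathOn H w n) (hst : s < t)
    (ht : t < n) (hadj : HAdj H (w s) (w t)) :
    HIsPathOn H (fun i => if i ≤ s then w i else w (i + (t - s - 1))) (n - (t - s - 1)) := by
  intro i hi
  rcases lt_trichotomy i s with h | rfl | h
  · simp only [if_pos h.le, if_pos (Nat.succ_le_of_lt h)]
    exact hw i (by omega)
  · simp only [le_refl, if_true, show ¬ i + 1 ≤ i by omega, if_false,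
      show i + 1 + (t - i - 1) = t by omega]
    exact hadj
  · simp only [show ¬ i ≤ s by omega, show ¬ i + 1 ≤ s by omega, if_false,
      show i + 1 + (t - s - 1) = i + (t - s - 1) + 1 by omega]
    exact hw _ (by omega)

theorem HIsPathOn.exists_hChordlessPath {U : Set V} {w : ℕ → V} {n : ℕ}
    (hw : HIsPathOn H w n) (hwU : ∀ i < n, w i ∈ U) (hends : w 0 ≠ w (n - 1)) :
    ∃ u m, HChordlessPath H u m ∧ 2 ≤ m ∧ (∀ i < m, u i ∈ U) ∧
      u 0 = w 0 ∧ u (m - 1) = w (n - 1) := by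
  induction n using Nat.strong_induction_on generalizing w with
  | _ n ih =>
  have hn : 2 ≤ n := by
    by_contra
    exact hends (by rw [show n - 1 = 0 by omega])
  by_cases hchordless : HChordlessOn H w n
  · exact ⟨w, n, ⟨hw, hw.simpleOn_of_hChordlessOn hchordless hends, hchordless⟩, hn, hwU,
      rfl, rfl⟩
  simp only [HChordlessOn, not_forall, not_not] at hchordless
  obtain ⟨s, t, ht, hst, hadj⟩ := hchordless
  have hlast : n - (t - s - 1) - 1 + (t - s - 1) = n - 1 := by omega
  obtain ⟨u, m, hu, hm, huU, hu0, hum⟩ :=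
    ih (n - (t - s - 1)) (by omega) (hw.skip (by omega) ht hadj)
      (fun i hi => by split_ifs <;> exact hwU _ (by omega))
      (by simpa [show ¬ n - (t - s - 1) - 1 ≤ s by omega, hlast] using hends)
  refine ⟨u, m, hu, hm, huU, by simpa using hu0, ?_⟩
  simpa [show ¬ n - (t - s - 1) - 1 ≤ s by omega, hlast] using hum

theorem HChordlessPath.shift {u : ℕ → V} {n s m : ℕ} (hu : HChordlessPath H u n)
    (h : s + m ≤ n) : HChordlessPath H (fun j => u (s + j)) m :=
  ⟨fun i _ => hu.1 (s + i) (by omega),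
    fun i j _ _ hij => by have := hu.2.1 _ _ (by omega) (by omega) hij; omega,
    fun i j _ _ => hu.2.2 (s + i) (s + j) (by omega) (by omega)⟩

theorem HChordlessPath.hChordlessCycle_seqCons {u : ℕ → V} {m : ℕ} {c : V}
    (hu : HChordlessPath H u m) (hm : 2 ≤ m) (hne : ∀ j < m, c ≠ u j)
    (hfirst : HAdj H c (u 0)) (hlast : HAdj H (u (m - 1)) c)
    (hinner : ∀ j, 0 < j → j + 1 < m → ¬ HAdj H c (u j))
    (htri : ¬ ∃ e ∈ H, c ∈ e ∧ u 0 ∈ e ∧ u 1 ∈ e) :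
    HChordlessCycle H (seqCons c u) (m + 1) := by
  obtain ⟨hpath, hsimple, hchordless⟩ := hu
  obtain ⟨m, rfl⟩ : ∃ m', m = m' + 1 := ⟨m - 1, by omega⟩
  have hnonadj : ∀ i j, i < j → j < m + 2 → ¬ CycConsec (m + 2) i j →
      ¬ HAdj H (seqCons c u i) (seqCons c u j) := by
    intro i j hij hj hcc
    unfold CycConsec at hcc
    obtain ⟨j, rfl⟩ : ∃ j', j = j' + 1 := ⟨j - 1, by omega⟩
    cases i with
    | zero => exact hinner j (by omega) (by omega)
    | succ i => exact hchordless i j (by omega) (by omega)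
  refine ⟨⟨by omega, ?_, ?_, by simpa using hlast⟩, ?_, ?_⟩
  · rintro (_ | i) (_ | j) hi hj hij
    · rfl
    · exact absurd hij (hne j (by omega))
    · exact absurd hij.symm (hne i (by omega))
    · simpa using hsimple i j (by omega) (by omega) hij
  · rintro (_ | i) hi
    · exact hfirst
    · exact hpath i (by omega)
  · intro i j hi hj hij hcc
    rcases lt_or_gt_of_ne hij with h | h
    · exact hnonadj i j h hj hcc
    · exact fun hadj => hnonadj j i h hi (by unfold CycConsec at hcc ⊢; omega) hadj.symm
  · rintro ⟨e, he, hall⟩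
    exact htri ⟨e, he, hall 0 (by omega), hall 1 (by omega), hall 2 (by omega)⟩

theorem HChordlessPath.hChordlessCycle_or_forall_triangle {u : ℕ → V} {m : ℕ} {c : V}
    (hu : HChordlessPath H u m) (hne : ∀ j < m, c ≠ u j) (hfirst : HAdj H c (u 0))
    (hlast : HAdj H c (u (m - 1))) :
    (∃ (q : ℕ → V) (l : ℕ), HChordlessCycle H q l ∧ ∃ j, j < l ∧ q j = c) ∨
      ∀ i, i + 1 < m → ∃ e ∈ H, c ∈ e ∧ u i ∈ e ∧ u (i + 1) ∈ e := by
  classical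
  refine or_iff_not_imp_right.2 fun hgap => ?_
  push Not at hgap
  obtain ⟨i, hi, hnotri⟩ := hgap
  set s := Nat.findGreatest (fun j => HAdj H c (u j)) i
  have hs_adj : HAdj H c (u s) := Nat.findGreatest_spec (P := fun j => HAdj H c (u j))
    (Nat.zero_le i) hfirst
  have hs_le : s ≤ i := Nat.findGreatest_le i
  have hs_max : ∀ j, s < j → j ≤ i → ¬ HAdj H c (u j) :=
    fun j => Nat.findGreatest_is_greatest
  have hex : ∃ t, i < t ∧ t < m ∧ HAdj H c (u t) := ⟨m - 1, by omega, by omega, hlast⟩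
  obtain ⟨hit, htm, ht_adj⟩ := Nat.find_spec hex
  have ht_min : ∀ j < Nat.find hex, ¬ (i < j ∧ j < m ∧ HAdj H c (u j)) :=
    fun j => Nat.find_min hex
  set t := Nat.find hex
  refine ⟨seqCons c fun j => u (s + j), t - s + 1 + 1, ?_, 0, by omega, rfl⟩
  refine (hu.shift (s := s) (m := t - s + 1) (by omega)).hChordlessCycle_seqCons (by omega)
    (fun j hj => hne _ (by omega)) hs_adj (by simpa [show s + (t - s) = t by omega] using
      ht_adj.symm) (fun j hj0 hjt hadj => ?_) ?_
  · by_cases h : s + j ≤ i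
    · exact hs_max _ (by omega) h hadj
    · exact ht_min (s + j) (by omega) ⟨by omega, by omega, hadj⟩
  · rintro ⟨e, he, hce, hes, hes'⟩
    by_cases hsi : s = i
    · rw [hsi] at hes hes'
      exact hnotri e he hce hes hes'
    · exact hs_max (s + 1) (by omega) (by omega) ⟨hne _ (by omega), e, he, hce, hes'⟩

end

/-- If a node `v` lies on a simple cycle `v = p 0, p 1, ..., p (k-1), p 0` in a
hypergraph, then: `v` lies on a chordless cycle, or some hyperedge contains `v`
and its two cycle neighbors, or there is a hand-fan centered at `v` from `p 1`
to `p (k-1)`. -/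
theorem simple_cycle_implications
    {V : Type*} (H : Set (Set V)) (p : ℕ → V) (k : ℕ) (v : V)
    (hcyc : HSimpleCycle H p k) (hv : p 0 = v) :
    (∃ (q : ℕ → V) (m : ℕ), HChordlessCycle H q m ∧ ∃ j, j < m ∧ q j = v) ∨
    (∃ e ∈ H, v ∈ e ∧ p 1 ∈ e ∧ p (k - 1) ∈ e) ∨
    (∃ (u : ℕ → V) (m : ℕ), HandFan H v u m ∧ u 0 = p 1 ∧ u (m - 1) = p (k - 1)) := by
  obtain ⟨hk, hsimple, hpath, hclose⟩ := hcyc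
  subst hv
  have hne : ∀ i, 0 < i → i < k → p 0 ≠ p i := fun i hi hik h => by
    have := hsimple 0 i (by omega) hik h
    omega
  have hlast : k - 1 - 1 + 1 = k - 1 := by omega
  obtain ⟨u, m, hu, hm, huU, hu0, hum⟩ :=
    HIsPathOn.exists_hChordlessPath (U := {x | p 0 ≠ x}) (w := fun i => p (i + 1)) (n := k - 1)
      (fun i hi => hpath (i + 1) (by omega)) (fun i hi => hne _ (by omega) (by omega))
      (fun h => by have := hsimple _ _ (by omega) (by omega) h; omega)
  simp only [Nat.zero_add, hlast] at hu0 hum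
  rcases hu.hChordlessCycle_or_forall_triangle huU (hu0 ▸ hpath 0 (by omega))
    (hum ▸ hclose.symm) with hcycle | htri
  · exact Or.inl hcycle
  obtain rfl | hm3 := hm.eq_or_lt
  · obtain ⟨e, he, hve, h0, h1⟩ := htri 0 (by omega)
    exact Or.inr (Or.inl ⟨e, he, hve, hu0 ▸ h0, hum ▸ h1⟩)
  · exact Or.inr (Or.inr ⟨u, m, ⟨hm3, hu, htri, huU⟩, hu0, hum⟩)
end

section
/- Consider the correctness of the hypergraph encoding in the hyperclique reduction: let k ≥ 3 and let G be a tripartite graph with vertex sets V_1, V_2, and V_3 where V_3 is identified with the product U_3 × ... × U_k. Build a (k−1)-uniform hypergraph G' on vertex set V_1 ∪ V_2 ∪ U_3 ∪ ... ∪ U_k with hyperedges: {v_1, u_3, ..., u_k} for each edge (v_1, (u_3,...,u_k)) ∈ E_{1,3}; {v_2, u_3, ..., u_k} for each edge (v_2, (u_3,...,u_k)) ∈ E_{2,3}; and, for each edge (v_1, v_2) ∈ E_{1,2}, all sets {v_1, v_2} ∪ S where S picks one vertex from each of k−3 distinct sets among U_3,...,U_k. Then the k-element vertex sets {v_1, v_2,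 u_3, ..., u_k} that form k-hypercliques in G' are exactly those with (v_1,v_2) ∈ E_{1,2}, (v_1,(u_3,...,u_k)) ∈ E_{1,3}, and (v_2,(u_3,...,u_k)) ∈ E_{2,3}, i.e., they correspond exactly to the triangles of G. -/
/-- Vertex type of the hypergraph built from a tripartite graph whose third
part is the product `U^(k-2)`: vertices are `V1 ∪ V2 ∪ (U_3 ∪ ... ∪ U_k)`. -/
abbrev HVert (V1 V2 U : Type*) (k : ℕ) : Type _ := V1 ⊕ V2 ⊕ (Fin (k - 2) × U)

/-- The set of coordinate vertices representing the `V3`-vertex `u`. -/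
def coordSet {V1 V2 U : Type*} [DecidableEq V1] [DecidableEq V2] [DecidableEq U]
    {k : ℕ} (u : Fin (k - 2) → U) : Finset (HVert V1 V2 U k) :=
  Finset.univ.image fun i => Sum.inr (Sum.inr (i, u i))

/-- The `(k-1)`-uniform hypergraph encoding a tripartite graph with parts
`V1`, `V2`, `V3 = U^(k-2)` and edge relations `E12`, `E23`, `E13`. -/
def encodeHG {V1 V2 U : Type*} [DecidableEq V1] [DecidableEq V2] [DecidableEq U]
    (k : ℕ) (E12 : V1 → V2 → Prop)
    (E23 : V2 → (Fin (k - 2) → U) → Prop) (E13 : V1 → (Fin (k - 2) → U) → Prop) :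
    Set (Finset (HVert V1 V2 U k)) :=
  {e | (∃ v1 u, E13 v1 u ∧ e = insert (Sum.inl v1) (coordSet u))
     ∨ (∃ v2 u, E23 v2 u ∧ e = insert (Sum.inr (Sum.inl v2)) (coordSet u))
     ∨ (∃ (v1 : V1) (v2 : V2) (I : Finset (Fin (k - 2))) (f : Fin (k - 2) → U),
          E12 v1 v2 ∧ I.card = k - 3 ∧
          e = insert (Sum.inl v1) (insert (Sum.inr (Sum.inl v2))
                (I.image fun i => Sum.inr (Sum.inr (i, f i))))) }

/-- `S` is a `k`-hyperclique of the hypergraph `H`: it has `k` vertices and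
every `(k-1)`-subset of it is a hyperedge. -/
def IsHyperclique {W : Type*} (H : Set (Finset W)) (k : ℕ) (S : Finset W) : Prop :=
  S.card = k ∧ ∀ T ⊆ S, T.card = k - 1 → T ∈ H

/-! A `k`-set is a `k`-hyperclique exactly when each of its `k` one-point deletions is a
hyperedge. Deleting `v1` (resp. `v2`) from `{v1, v2, u_3, ..., u_k}` leaves a set that can only
be an `E23` (resp. `E13`) hyperedge, and that one only for the pair `(v2, u)` (resp. `(v1, u)`);
deleting a coordinate leaves a set containing both `v1` and `v2`, which can only be an `E12`
hyperedge. As `k ≥ 3`, there is at least one coordinate to delete. -/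

open Finset

lemma isHyperclique_iff_forall_erase_mem {W : Type*} [DecidableEq W] {H : Set (Finset W)}
    {S : Finset W} {k : ℕ} (hS : S.card = k) (hk : 0 < k) :
    IsHyperclique H k S ↔ ∀ x ∈ S, S.erase x ∈ H := by
  subst hS
  refine ⟨fun ⟨_, hH⟩ x hx ↦ hH _ (erase_subset x S) (card_erase_of_mem hx), fun h ↦ ⟨rfl, ?_⟩⟩
  intro T hTS hT
  have hcov : T ⋖ S := covBy_iff_card_sdiff_eq_one.2
    ⟨hTS, by rw [card_sdiff_of_subset hTS, hT, Nat.sub_sub_self hk]⟩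
  obtain ⟨x, hx, rfl⟩ := hcov.exists_finset_erase
  exact h x hx

section Encoding

variable {V1 V2 U : Type*} [DecidableEq V1] [DecidableEq V2] [DecidableEq U] {k : ℕ}
  {E12 : V1 → V2 → Prop} {E23 : V2 → (Fin (k - 2) → U) → Prop}
  {E13 : V1 → (Fin (k - 2) → U) → Prop}

omit [DecidableEq V1] [DecidableEq V2] [DecidableEq U] in
lemma coordVertex_injective (u : Fin (k - 2) → U) :
    Function.Injective fun i ↦ (Sum.inr (Sum.inr (i, u i)) : HVert V1 V2 U k) :=
  fun _ _ h ↦ by simpa using congrArg Prod.fst (Sum.inr_injective (Sum.inr_injective h))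

@[simp]
lemma mem_coordSet {x : HVert V1 V2 U k} {u : Fin (k - 2) → U} :
    x ∈ coordSet (V1 := V1) (V2 := V2) u ↔ ∃ i, Sum.inr (Sum.inr (i, u i)) = x := by
  simp [coordSet]

lemma card_coordSet (u : Fin (k - 2) → U) :
    (coordSet (V1 := V1) (V2 := V2) u).card = k - 2 := by
  simp [coordSet, card_image_of_injective _ (coordVertex_injective u)]

lemma forall_mem_coordSet {u : Fin (k - 2) → U} {p : HVert V1 V2 U k → Prop} :
    (∀ x ∈ coordSet u, p x) ↔ ∀ i, p (Sum.inr (Sum.inr (i, u i))) := by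
  simp [coordSet]

lemma coordSet_erase (u : Fin (k - 2) → U) (j : Fin (k - 2)) :
    (coordSet (V1 := V1) (V2 := V2) u).erase (Sum.inr (Sum.inr (j, u j))) =
      (univ.erase j).image fun i ↦ (Sum.inr (Sum.inr (i, u i)) : HVert V1 V2 U k) :=
  (image_erase (coordVertex_injective u) _ _).symm

lemma eq_and_eq_of_insert_coordSet_eq {x y : HVert V1 V2 U k} {u u' : Fin (k - 2) → U}
    (hx : ∀ p, x ≠ Sum.inr (Sum.inr p)) (hy : ∀ p, y ≠ Sum.inr (Sum.inr p))
    (h : (insert x (coordSet u) : Finset (HVert V1 V2 U k)) = insert y (coordSet u')) :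
    x = y ∧ u = u' := by
  have hxy : x ∈ insert y (coordSet u') := h ▸ mem_insert_self x _
  refine ⟨by simpa [(hx _).symm] using hxy, funext fun i ↦ ?_⟩
  have hi : Sum.inr (Sum.inr (i, u i)) ∈ insert y (coordSet u') :=
    h ▸ mem_insert_of_mem (mem_coordSet.2 ⟨i, rfl⟩)
  simpa [(hy _).symm, eq_comm] using hi

lemma insert_inr_coordSet_mem_encodeHG_iff {v2 : V2} {u : Fin (k - 2) → U} :
    insert (Sum.inr (Sum.inl v2)) (coordSet u) ∈ encodeHG k E12 E23 E13 ↔ E23 v2 u := by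
  refine ⟨?_, fun h ↦ Or.inr (Or.inl ⟨v2, u, h, rfl⟩)⟩
  rintro (⟨v1', u', -, he⟩ | ⟨v2', u', h, he⟩ | ⟨v1', v2', I, f, -, -, he⟩)
  · simpa using congrArg (Sum.inl v1' ∈ ·) he
  · obtain ⟨⟨⟩, rfl⟩ := eq_and_eq_of_insert_coordSet_eq (by simp) (by simp) he.symm
    exact h
  · simpa using congrArg (Sum.inl v1' ∈ ·) he

lemma insert_inl_coordSet_mem_encodeHG_iff {v1 : V1} {u : Fin (k - 2) → U} :
    insert (Sum.inl v1) (coordSet u) ∈ encodeHG k E12 E23 E13 ↔ E13 v1 u := by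
  refine ⟨?_, fun h ↦ Or.inl ⟨v1, u, h, rfl⟩⟩
  rintro (⟨v1', u', h, he⟩ | ⟨v2', u', -, he⟩ | ⟨v1', v2', I, f, -, -, he⟩)
  · obtain ⟨⟨⟩, rfl⟩ := eq_and_eq_of_insert_coordSet_eq (by simp) (by simp) he.symm
    exact h
  · simpa using congrArg (Sum.inr (Sum.inl v2') ∈ ·) he
  · simpa using congrArg (Sum.inr (Sum.inl v2') ∈ ·) he

lemma insert_insert_image_mem_encodeHG_iff {v1 : V1} {v2 : V2} {u : Fin (k - 2) → U}
    (j : Fin (k - 2)) :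
    insert (Sum.inl v1) (insert (Sum.inr (Sum.inl v2))
        ((univ.erase j).image fun i ↦ (Sum.inr (Sum.inr (i, u i)) : HVert V1 V2 U k)))
      ∈ encodeHG k E12 E23 E13 ↔ E12 v1 v2 := by
  refine ⟨?_, fun h ↦ Or.inr (Or.inr ⟨v1, v2, univ.erase j, u, h, ?_, rfl⟩)⟩
  · rintro (⟨v1', u', -, he⟩ | ⟨v2', u', -, he⟩ | ⟨v1', v2', I, f, h, -, he⟩)
    · simpa using congrArg (Sum.inr (Sum.inl v2) ∈ ·) he
    · simpa using congrArg (Sum.inl v1 ∈ ·) he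
    · have hv1 := congrArg (Sum.inl v1 ∈ ·) he
      have hv2 := congrArg (Sum.inr (Sum.inl v2) ∈ ·) he
      simp at hv1 hv2
      rwa [hv1, hv2]
  · rw [card_erase_of_mem (mem_univ j), card_univ, Fintype.card_fin]
    omega

end Encoding

/-- Correctness of the hypergraph encoding: the `k`-element vertex sets
`{v1, v2, u_3, ..., u_k}` forming `k`-hypercliques of the encoded hypergraph
are exactly those corresponding to triangles of the tripartite graph. -/
theorem encodeHG_hypercliques_are_triangles
    {V1 V2 U : Type*} [DecidableEq V1] [DecidableEq V2] [DecidableEq U]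
    (k : ℕ) (hk : 3 ≤ k) (E12 : V1 → V2 → Prop)
    (E23 : V2 → (Fin (k - 2) → U) → Prop) (E13 : V1 → (Fin (k - 2) → U) → Prop)
    (v1 : V1) (v2 : V2) (u : Fin (k - 2) → U) :
    IsHyperclique (encodeHG k E12 E23 E13) k
        (insert (Sum.inl v1) (insert (Sum.inr (Sum.inl v2)) (coordSet u)))
      ↔ E12 v1 v2 ∧ E23 v2 u ∧ E13 v1 u := by
  have hv2 : (Sum.inr (Sum.inl v2) : HVert V1 V2 U k) ∉ coordSet u := by simp
  have hv1 : (Sum.inl v1 : HVert V1 V2 U k) ∉ insert (Sum.inr (Sum.inl v2)) (coordSet u) := by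
    simp
  have hcard : (insert (Sum.inl v1) (insert (Sum.inr (Sum.inl v2)) (coordSet u)) :
      Finset (HVert V1 V2 U k)).card = k := by
    rw [card_insert_of_notMem hv1, card_insert_of_notMem hv2, card_coordSet]
    omega
  have : Nonempty (Fin (k - 2)) := ⟨⟨0, by omega⟩⟩
  rw [isHyperclique_iff_forall_erase_mem hcard (by omega), forall_mem_insert,
    forall_mem_insert, forall_mem_coordSet, erase_insert hv1, erase_insert_of_ne (by simp),
    erase_insert hv2]
  simp only [ne_eq, Sum.inr.injEq, reduceCtorEq, not_false_eq_true, erase_insert_of_ne,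
    coordSet_erase, insert_inr_coordSet_mem_encodeHG_iff, insert_inl_coordSet_mem_encodeHG_iff,
    insert_insert_image_mem_encodeHG_iff, forall_const]
  tauto
end
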